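/- For every Nash equilibrium Γ of the one-shot meta-game and every LLM j, let Γ̂^j be the role-homogeneous meta-action obtained by drawing M^j ∼ Γ^j, drawing a_r ∼ M_r^j independently across roles, and outputting (δ_{a_1},…,δ_{a_m}). Then the profile (Γ̂^j, Γ^{−j}) is also a Nash equilibrium in which every LLM obtains the same utility as under Γ. Consequently, for every Nash-equilibrium payoff vector there exists a Nash equilibrium inducing the same payoff vector in which every LLM uses a role-homogeneous meta-action. -/
import Mathlib


open Finset

namespace MetaGame

/-- A mixed action over a finite action set: a probability vector. -/
def Mixed (α : Type) [Fintype α] : Type :=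
  {f : α → ℝ // (∀ a, 0 ≤ f a) ∧ ∑ a, f a = 1}

/-- The point-mass (Dirac) mixed action on `a`. -/
noncomputable def Mixed.dirac {α : Type} [Fintype α] [DecidableEq α] (a : α) : Mixed α :=
  ⟨fun b => if b = a then 1 else 0,
    fun b => by by_cases h : b = a <;> simp [h],
    by simp⟩

/-- A finitely supported probability distribution on `α`. -/
structure FinDist (α : Type) where
  support : Finset α
  w : α → ℝ
  nonneg : ∀ x, 0 ≤ w x
  sum_one : ∑ x ∈ support, w x = 1
  zero_of_not_mem : ∀ x, x ∉ support → w x = 0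

/-- The point mass distribution on `x`. -/
noncomputable def FinDist.pure {α : Type} (x : α) : FinDist α := by
  classical
  exact
    { support := {x}
      w := fun y => if y = x then 1 else 0
      nonneg := fun y => by by_cases h : y = x <;> simp [h]
      sum_one := by simp
      zero_of_not_mem := fun y hy => by
        simp only [Finset.mem_singleton] at hy
        simp [hy] }

variable {m k : ℕ} {A : Fin m → Type} [∀ i, Fintype (A i)] [∀ i, DecidableEq (A i)]

/-- Multilinear extension of a payoff function to profiles of mixed actions. -/
noncomputable def expPay (u : (∀ r : Fin m, A r) → ℝ) (σ : ∀ r, Mixed (A r)) : ℝ :=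
  ∑ a : ∀ r : Fin m, A r, (∏ r, (σ r).1 (a r)) * u a

/-- A pure meta-action: a mixed action for each role. -/
abbrev PureMeta (A : Fin m → Type) [∀ i, Fintype (A i)] : Type := ∀ i, Mixed (A i)

/-- The role-homogeneous pure meta-action instructing pure action `a i` in each role `i`. -/
noncomputable def diracProfile (a : ∀ i : Fin m, A i) : PureMeta A := fun i => Mixed.dirac (a i)

/-- Utility of LLM `j` under a profile of pure meta-actions. -/
noncomputable def Upure (u : ∀ i : Fin m, (∀ r : Fin m, A r) → ℝ) (p : Fin m → Fin k → ℝ)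
    (j : Fin k) (M : Fin k → PureMeta A) : ℝ :=
  ∑ i, ∑ g : Fin m → Fin k,
    if g i = j then (∏ r, p r (g r)) * expPay (u i) (fun r => M (g r) r) else 0

/-- Utility of LLM `j` under a profile of (finitely supported, independent) meta-actions. -/
noncomputable def U (u : ∀ i : Fin m, (∀ r : Fin m, A r) → ℝ) (p : Fin m → Fin k → ℝ)
    (Γ : Fin k → FinDist (PureMeta A)) (j : Fin k) : ℝ :=
  ∑ M ∈ Fintype.piFinset (fun j' => (Γ j').support),
    (∏ j', (Γ j').w (M j')) * Upure u p j M

/-- Nash equilibrium of the one-shot meta-game. -/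
def Nash (u : ∀ i : Fin m, (∀ r : Fin m, A r) → ℝ) (p : Fin m → Fin k → ℝ)
    (Γ : Fin k → FinDist (PureMeta A)) : Prop :=
  ∀ (j : Fin k) (Γ' : FinDist (PureMeta A)),
    U u p (Function.update Γ j Γ') j ≤ U u p Γ j

/-- Average utility of the clients governed by LLM `j`. -/
noncomputable def avgU (u : ∀ i : Fin m, (∀ r : Fin m, A r) → ℝ) (p : Fin m → Fin k → ℝ)
    (Γ : Fin k → FinDist (PureMeta A)) (j : Fin k) : ℝ :=
  U u p Γ j / ∑ i, p i j

/-- A meta-action is role-homogeneous if every pure meta-action in its support is a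
tuple of point-mass mixed actions. -/
def RoleHomogeneous (Γ : FinDist (PureMeta A)) : Prop :=
  ∀ M ∈ Γ.support, ∃ a : ∀ i : Fin m, A i, M = diracProfile a


/-- `Γhat` is the role-homogeneous flattening of `Γ`: draw a pure meta-action `M ∼ Γ`, then draw
actions `a i ∼ M i` independently across roles and output the tuple of point masses
`(δ_{a 1},…,δ_{a m})`. -/
def Flattens (Γ Γhat : FinDist (PureMeta A)) : Prop :=
  RoleHomogeneous Γhat ∧
  ∀ a : ∀ i : Fin m, A i,
    Γhat.w (diracProfile a) = ∑ M ∈ Γ.support, Γ.w M * ∏ i, (M i).1 (a i)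


section Helpers

variable (u : ∀ i : Fin m, (∀ r : Fin m, A r) → ℝ) (p : Fin m → Fin k → ℝ)

lemma Mixed.dirac_apply {α : Type} [Fintype α] [DecidableEq α] (a b : α) :
    (Mixed.dirac a).1 b = if b = a then 1 else 0 := rfl

lemma diracProfile_apply (a : ∀ i : Fin m, A i) (i : Fin m) :
    diracProfile a i = Mixed.dirac (a i) := rfl

lemma sum_prod_mixed (σ : PureMeta A) :
    ∑ a : ∀ i : Fin m, A i, ∏ r, (σ r).1 (a r) = 1 := by
  calc ∑ a : ∀ i : Fin m, A i, ∏ r, (σ r).1 (a r)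
      = ∑ a ∈ Fintype.piFinset (fun r : Fin m => (Finset.univ : Finset (A r))),
          ∏ r, (σ r).1 (a r) := by rw [Fintype.piFinset_univ]
    _ = ∏ r, ∑ x, (σ r).1 x := (Finset.prod_univ_sum _ _).symm
    _ = 1 := Finset.prod_eq_one fun r _ => (σ r).2.2

lemma diracProfile_injective : Function.Injective (diracProfile (A := A)) := by
  intro a b h
  funext i
  by_contra hne
  have h1 : (diracProfile a i).1 (a i) = (diracProfile b i).1 (a i) := by rw [h]
  simp [diracProfile_apply, Mixed.dirac_apply, hne] at h1

lemma sum_dirac_prod (a : ∀ i : Fin m, A i) (c : (∀ i : Fin m, A i) → ℝ) :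
    ∑ b : ∀ i : Fin m, A i, (∏ r, (Mixed.dirac (a r)).1 (b r)) * c b = c a := by
  have h : ∀ b : ∀ i : Fin m, A i,
      (∏ r, (Mixed.dirac (a r)).1 (b r)) = if b = a then 1 else 0 := by
    intro b
    by_cases hba : b = a
    · subst hba; simp [Mixed.dirac_apply]
    · rw [if_neg hba]
      obtain ⟨r, hr⟩ := Function.ne_iff.1 hba
      exact Finset.prod_eq_zero (Finset.mem_univ r) (by simp [Mixed.dirac_apply, hr])
  simp [h, ite_mul]

lemma expPay_update (v : (∀ r : Fin m, A r) → ℝ) (N : Fin k → PureMeta A) (j : Fin k)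
    (σ : PureMeta A) (g : Fin m → Fin k) :
    expPay v (fun r => (Function.update N j σ) (g r) r)
      = ∑ a : ∀ i : Fin m, A i, (∏ r, (σ r).1 (a r)) *
          expPay v (fun r => (Function.update N j (diracProfile a)) (g r) r) := by
  have key : ∀ b : ∀ r : Fin m, A r,
      ∑ a : ∀ i : Fin m, A i, (∏ r, (σ r).1 (a r)) *
          (∏ r, ((Function.update N j (diracProfile a)) (g r) r).1 (b r))
        = ∏ r, ((Function.update N j σ) (g r) r).1 (b r) := by
    intro b
    have hmerge : ∀ a : ∀ i : Fin m, A i,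
        (∏ r, (σ r).1 (a r)) * (∏ r, ((Function.update N j (diracProfile a)) (g r) r).1 (b r))
          = ∏ r, ((σ r).1 (a r) * ((Function.update N j (diracProfile a)) (g r) r).1 (b r)) :=
      fun a => (Finset.prod_mul_distrib).symm
    have hsplit : ∀ (a : ∀ i : Fin m, A i) (r : Fin m),
        ((Function.update N j (diracProfile a)) (g r) r).1 (b r)
          = if g r = j then (Mixed.dirac (a r)).1 (b r) else (N (g r) r).1 (b r) := by
      intro a r
      rw [Function.update_apply]
      split <;> rfl
    simp only [hmerge]
    simp only [hsplit]
    calc ∑ a : ∀ i : Fin m, A i, ∏ r, ((σ r).1 (a r) *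
            if g r = j then (Mixed.dirac (a r)).1 (b r) else (N (g r) r).1 (b r))
        = ∑ a ∈ Fintype.piFinset (fun r : Fin m => (Finset.univ : Finset (A r))),
            ∏ r, ((σ r).1 (a r) *
              if g r = j then (Mixed.dirac (a r)).1 (b r) else (N (g r) r).1 (b r)) := by
          rw [Fintype.piFinset_univ]
      _ = ∏ r, ∑ x : A r, ((σ r).1 x *
              if g r = j then (Mixed.dirac x).1 (b r) else (N (g r) r).1 (b r)) :=
          (Finset.prod_univ_sum (fun r : Fin m => (Finset.univ : Finset (A r)))
            (fun r x => (σ r).1 x *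
              if g r = j then (Mixed.dirac x).1 (b r) else (N (g r) r).1 (b r))).symm
      _ = ∏ r, ((Function.update N j σ) (g r) r).1 (b r) := by
          refine Finset.prod_congr rfl fun r _ => ?_
          rw [Function.update_apply]
          by_cases h : g r = j
          · simp [h, Mixed.dirac_apply]
          · simp [h, ← Finset.sum_mul, (σ r).2.2]
  unfold expPay
  simp only [Finset.mul_sum]
  conv_rhs => rw [Finset.sum_comm]
  refine Finset.sum_congr rfl fun b _ => ?_
  rw [← key b, Finset.sum_mul]
  exact Finset.sum_congr rfl fun a _ => by ring

lemma Upure_update (ℓ : Fin k) (N : Fin k → PureMeta A) (j : Fin k) (σ : PureMeta A) :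
    Upure u p ℓ (Function.update N j σ)
      = ∑ a : ∀ i : Fin m, A i, (∏ r, (σ r).1 (a r)) *
          Upure u p ℓ (Function.update N j (diracProfile a)) := by
  unfold Upure
  simp only [Finset.mul_sum]
  conv_rhs => rw [Finset.sum_comm]
  refine Finset.sum_congr rfl fun i _ => ?_
  conv_rhs => rw [Finset.sum_comm]
  refine Finset.sum_congr rfl fun g _ => ?_
  by_cases h : g i = ℓ
  · simp only [if_pos h]
    rw [expPay_update (u i) N j σ g, Finset.mul_sum]
    exact Finset.sum_congr rfl fun a _ => by ring
  · simp only [if_neg h, mul_zero, Finset.sum_const_zero]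

lemma sum_piFinset_split {β : Type} (t : Fin k → Finset β) (j : Fin k)
    (F : (Fin k → β) → ℝ) :
    ∑ M ∈ Fintype.piFinset t, F M
      = ∑ x ∈ t j, ∑ M ∈ Fintype.piFinset (Function.update t j {x}), F M := by
  rw [Finset.sum_sigma' (t j) (fun x => Fintype.piFinset (Function.update t j {x}))
    (fun _ M => F M)]
  refine Finset.sum_bij' (i := fun M _ => (⟨M j, M⟩ : Σ _ : β, (Fin k → β)))
    (j := fun q _ => q.2) ?_ ?_ ?_ ?_ ?_
  · intro M hM
    rw [Finset.mem_sigma]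
    refine ⟨Fintype.mem_piFinset.1 hM j, Fintype.mem_piFinset.2 fun i => ?_⟩
    rcases eq_or_ne i j with rfl | h
    · rw [Function.update_self]; exact Finset.mem_singleton_self _
    · rw [Function.update_of_ne h]; exact Fintype.mem_piFinset.1 hM i
  · intro q hq
    rw [Finset.mem_sigma] at hq
    refine Fintype.mem_piFinset.2 fun i => ?_
    have := Fintype.mem_piFinset.1 hq.2 i
    rcases eq_or_ne i j with rfl | h
    · rw [Function.update_self] at this
      show q.2 i ∈ t i
      rw [Finset.mem_singleton.1 this]; exact hq.1
    · show q.2 i ∈ t i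
      rwa [Function.update_of_ne h] at this
  · intro M _
    rfl
  · intro q hq
    rw [Finset.mem_sigma] at hq
    show (⟨q.2 j, q.2⟩ : Σ _ : β, (Fin k → β)) = q
    have hq2 : q.2 j = q.1 := by
      have := Fintype.mem_piFinset.1 hq.2 j
      rw [Function.update_self] at this
      exact Finset.mem_singleton.1 this
    exact Sigma.ext hq2 (heq_of_eq rfl)
  · intro M _
    rfl

lemma sum_piFinset_single {β : Type} (t : Fin k → Finset β) (j : Fin k) (x y : β)
    (F : (Fin k → β) → ℝ) :
    ∑ M ∈ Fintype.piFinset (Function.update t j {x}), F (Function.update M j y)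
      = ∑ M ∈ Fintype.piFinset (Function.update t j {y}), F M := by
  have hmem : ∀ (z w : β) (M : Fin k → β), M ∈ Fintype.piFinset (Function.update t j {z}) →
      Function.update M j w ∈ Fintype.piFinset (Function.update t j {w}) := by
    intro z w M hM
    refine Fintype.mem_piFinset.2 fun i => ?_
    rcases eq_or_ne i j with rfl | h
    · rw [Function.update_self, Function.update_self]; exact Finset.mem_singleton_self _
    · rw [Function.update_of_ne h, Function.update_of_ne h]
      have := Fintype.mem_piFinset.1 hM i
      rwa [Function.update_of_ne h] at this
  have hval : ∀ (z : β) (M : Fin k → β), M ∈ Fintype.piFinset (Function.update t j {z}) →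
      M j = z := by
    intro z M hM
    have := Fintype.mem_piFinset.1 hM j
    rw [Function.update_self] at this
    exact Finset.mem_singleton.1 this
  refine Finset.sum_bij' (fun M _ => Function.update M j y) (fun M _ => Function.update M j x)
    (fun M hM => hmem x y M hM) (fun M hM => hmem y x M hM) ?_ ?_ (fun M _ => rfl)
  · intro M hM
    show Function.update (Function.update M j y) j x = M
    rw [Function.update_idem, ← hval x M hM, Function.update_eq_self]
  · intro M hM
    show Function.update (Function.update M j x) j y = M
    rw [Function.update_idem, ← hval y M hM, Function.update_eq_self]

lemma U_update_eq (Δ : Fin k → FinDist (PureMeta A)) (j : Fin k)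
    (D : FinDist (PureMeta A)) (ℓ : Fin k) :
    U u p (Function.update Δ j D) ℓ
      = ∑ x ∈ D.support, D.w x *
          ∑ a : ∀ i : Fin m, A i, (∏ r, (x r).1 (a r)) *
            U u p (Function.update Δ j (FinDist.pure (diracProfile a))) ℓ := by
  have hsupp : (fun j' => ((Function.update Δ j D) j').support)
      = Function.update (fun j' => (Δ j').support) j D.support := by
    funext j'
    rcases eq_or_ne j' j with rfl | h
    · rw [Function.update_self, Function.update_self]
    · rw [Function.update_of_ne h, Function.update_of_ne h]
  conv_lhs => rw [U]
  rw [hsupp, sum_piFinset_split _ j, Function.update_self]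
  refine Finset.sum_congr rfl fun x hx => ?_
  simp only [Function.update_idem]
  have hMj : ∀ M ∈ Fintype.piFinset
      (Function.update (fun j' => (Δ j').support) j ({x} : Finset (PureMeta A))), M j = x := by
    intro M hM
    have := Fintype.mem_piFinset.1 hM j
    rw [Function.update_self] at this
    exact Finset.mem_singleton.1 this
  have hterm : ∀ M ∈ Fintype.piFinset
      (Function.update (fun j' => (Δ j').support) j ({x} : Finset (PureMeta A))),
      (∏ j', ((Function.update Δ j D) j').w (M j')) * Upure u p ℓ M
        = ∑ a : ∀ i : Fin m, A i, (∏ r, (x r).1 (a r)) *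
            (D.w x * ((∏ j' ∈ Finset.univ.erase j, (Δ j').w (M j')) *
              Upure u p ℓ (Function.update M j (diracProfile a)))) := by
    intro M hM
    have h1 : (∏ j', ((Function.update Δ j D) j').w (M j'))
        = D.w x * ∏ j' ∈ Finset.univ.erase j, ((Function.update Δ j D) j').w (M j') := by
      rw [← Finset.mul_prod_erase Finset.univ _ (Finset.mem_univ j),
        Function.update_self, hMj M hM]
    have h1' : (∏ j' ∈ Finset.univ.erase j, ((Function.update Δ j D) j').w (M j'))
        = ∏ j' ∈ Finset.univ.erase j, (Δ j').w (M j') :=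
      Finset.prod_congr rfl fun j' hj' => by
        rw [Function.update_of_ne (Finset.ne_of_mem_erase hj')]
    have h2 : Upure u p ℓ M = ∑ a : ∀ i : Fin m, A i, (∏ r, (x r).1 (a r)) *
        Upure u p ℓ (Function.update M j (diracProfile a)) := by
      conv_lhs => rw [← Function.update_eq_self j M, hMj M hM]
      exact Upure_update u p ℓ M j x
    rw [h1, h1', h2, Finset.mul_sum]
    exact Finset.sum_congr rfl fun a _ => by ring
  rw [Finset.sum_congr rfl hterm, Finset.sum_comm, Finset.mul_sum]
  refine Finset.sum_congr rfl fun a _ => ?_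
  have hU : U u p (Function.update Δ j (FinDist.pure (diracProfile a))) ℓ
      = ∑ M ∈ Fintype.piFinset
          (Function.update (fun j' => (Δ j').support) j ({diracProfile a} : Finset (PureMeta A))),
          (∏ j' ∈ Finset.univ.erase j, (Δ j').w (M j')) * Upure u p ℓ M := by
    unfold U
    have hsupp2 : (fun j' => ((Function.update Δ j (FinDist.pure (diracProfile a))) j').support)
        = Function.update (fun j' => (Δ j').support) j ({diracProfile a} : Finset (PureMeta A)) := by
      funext j'
      rcases eq_or_ne j' j with rfl | h
      · rw [Function.update_self, Function.update_self]; rfl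
      · rw [Function.update_of_ne h, Function.update_of_ne h]
    rw [hsupp2]
    refine Finset.sum_congr rfl fun M hM => ?_
    have hMj2 : M j = diracProfile a := by
      have := Fintype.mem_piFinset.1 hM j
      rw [Function.update_self] at this
      exact Finset.mem_singleton.1 this
    congr 1
    rw [← Finset.mul_prod_erase Finset.univ _ (Finset.mem_univ j), Function.update_self, hMj2]
    have hw1 : (FinDist.pure (diracProfile a)).w (diracProfile a) = 1 := by
      simp [FinDist.pure]
    rw [hw1, one_mul]
    exact Finset.prod_congr rfl fun j' hj' => by
      rw [Function.update_of_ne (Finset.ne_of_mem_erase hj')]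
  rw [hU, Finset.mul_sum, Finset.mul_sum]
  have hPe : ∀ M : Fin k → PureMeta A,
      (∏ j' ∈ Finset.univ.erase j, (Δ j').w ((Function.update M j (diracProfile a)) j'))
        = ∏ j' ∈ Finset.univ.erase j, (Δ j').w (M j') :=
    fun M => Finset.prod_congr rfl fun j' hj' => by
      rw [Function.update_of_ne (Finset.ne_of_mem_erase hj')]
  calc ∑ M ∈ Fintype.piFinset
        (Function.update (fun j' => (Δ j').support) j ({x} : Finset (PureMeta A))),
        (∏ r, (x r).1 (a r)) * (D.w x * ((∏ j' ∈ Finset.univ.erase j, (Δ j').w (M j')) *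
          Upure u p ℓ (Function.update M j (diracProfile a))))
      = ∑ M ∈ Fintype.piFinset
          (Function.update (fun j' => (Δ j').support) j ({x} : Finset (PureMeta A))),
          (fun N => (∏ r, (x r).1 (a r)) * (D.w x *
            ((∏ j' ∈ Finset.univ.erase j, (Δ j').w (N j')) * Upure u p ℓ N)))
            (Function.update M j (diracProfile a)) := by
        refine Finset.sum_congr rfl fun M _ => ?_
        simp only [hPe]
    _ = ∑ M ∈ Fintype.piFinset
          (Function.update (fun j' => (Δ j').support) j ({diracProfile a} : Finset (PureMeta A))),
          (∏ r, (x r).1 (a r)) * (D.w x *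
            ((∏ j' ∈ Finset.univ.erase j, (Δ j').w (M j')) * Upure u p ℓ M)) :=
        sum_piFinset_single (fun j' => (Δ j').support) j x (diracProfile a)
          (fun N => (∏ r, (x r).1 (a r)) * (D.w x *
            ((∏ j' ∈ Finset.univ.erase j, (Δ j').w (N j')) * Upure u p ℓ N)))
    _ = ∑ M ∈ Fintype.piFinset
          (Function.update (fun j' => (Δ j').support) j ({diracProfile a} : Finset (PureMeta A))),
          D.w x * ((∏ r, (x r).1 (a r)) *
            ((∏ j' ∈ Finset.univ.erase j, (Δ j').w (M j')) * Upure u p ℓ M)) :=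
        Finset.sum_congr rfl fun M _ => by ring

lemma flatten_sum_eq {Γ Γhat : FinDist (PureMeta A)} (h : Flattens Γ Γhat)
    (c : (∀ i : Fin m, A i) → ℝ) :
    ∑ x ∈ Γhat.support, Γhat.w x * ∑ a : ∀ i : Fin m, A i, (∏ r, (x r).1 (a r)) * c a
      = ∑ x ∈ Γ.support, Γ.w x * ∑ a : ∀ i : Fin m, A i, (∏ r, (x r).1 (a r)) * c a := by
  classical
  have hsub : Γhat.support ⊆ Finset.image diracProfile Finset.univ := by
    intro M hM
    obtain ⟨a, ha⟩ := h.1 M hM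
    exact Finset.mem_image.2 ⟨a, Finset.mem_univ a, ha.symm⟩
  rw [Finset.sum_subset hsub (fun M _ hM => by rw [Γhat.zero_of_not_mem M hM, zero_mul]),
    Finset.sum_image (fun a _ b _ hab => diracProfile_injective hab)]
  calc ∑ a : ∀ i : Fin m, A i, Γhat.w (diracProfile a) *
        ∑ b : ∀ i : Fin m, A i, (∏ r, ((diracProfile a) r).1 (b r)) * c b
      = ∑ a : ∀ i : Fin m, A i,
          (∑ M ∈ Γ.support, Γ.w M * ∏ i, (M i).1 (a i)) * c a := by
        refine Finset.sum_congr rfl fun a _ => ?_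
        rw [h.2 a]
        congr 1
        exact sum_dirac_prod a c
    _ = ∑ x ∈ Γ.support, Γ.w x * ∑ a : ∀ i : Fin m, A i, (∏ r, (x r).1 (a r)) * c a := by
        simp only [Finset.sum_mul]
        rw [Finset.sum_comm]
        refine Finset.sum_congr rfl fun M _ => ?_
        rw [Finset.mul_sum]
        exact Finset.sum_congr rfl fun a _ => mul_assoc _ _ _

lemma U_flatten (Δ : Fin k → FinDist (PureMeta A)) (j : Fin k)
    {D : FinDist (PureMeta A)} (h : Flattens (Δ j) D) (ℓ : Fin k) :
    U u p (Function.update Δ j D) ℓ = U u p Δ ℓ := by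
  rw [U_update_eq u p Δ j D ℓ, flatten_sum_eq h, ← U_update_eq u p Δ j (Δ j) ℓ,
    Function.update_eq_self]

lemma flatten_step {Δ : Fin k → FinDist (PureMeta A)} (hN : Nash u p Δ) (j : Fin k)
    {D : FinDist (PureMeta A)} (hF : Flattens (Δ j) D) :
    Nash u p (Function.update Δ j D) ∧
      ∀ ℓ : Fin k, U u p (Function.update Δ j D) ℓ = U u p Δ ℓ := by
  refine ⟨?_, fun ℓ => U_flatten u p Δ j hF ℓ⟩
  intro j'' Γ'
  rcases eq_or_ne j'' j with rfl | h
  · rw [Function.update_idem, U_flatten u p Δ j'' hF j'']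
    exact hN j'' Γ'
  · rw [← Function.update_comm h,
      U_flatten u p (Function.update Δ j'' Γ') j
        (by rwa [Function.update_of_ne (Ne.symm h)]) j'',
      U_flatten u p Δ j hF j'']
    exact hN j'' Γ'

open Classical in
noncomputable def flattenW (Δ : FinDist (PureMeta A)) : PureMeta A → ℝ := fun M =>
  if h : ∃ a : ∀ i : Fin m, A i, M = diracProfile a
  then ∑ N ∈ Δ.support, Δ.w N * ∏ i, (N i).1 (h.choose i) else 0

lemma flattenW_dirac (Δ : FinDist (PureMeta A)) (a : ∀ i : Fin m, A i) :
    flattenW Δ (diracProfile a) = ∑ N ∈ Δ.support, Δ.w N * ∏ i, (N i).1 (a i) := by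
  unfold flattenW
  rw [dif_pos (⟨a, rfl⟩ : ∃ b : ∀ i : Fin m, A i, diracProfile a = diracProfile b)]
  have he := (⟨a, rfl⟩ : ∃ b : ∀ i : Fin m, A i, diracProfile a = diracProfile b).choose_spec
  rw [show (⟨a, rfl⟩ : ∃ b : ∀ i : Fin m, A i,
    diracProfile a = diracProfile b).choose = a from (diracProfile_injective he).symm]

open Classical in
noncomputable def flatten (Δ : FinDist (PureMeta A)) : FinDist (PureMeta A) where
  support := Finset.image diracProfile Finset.univ
  w := flattenW Δ
  nonneg := fun M => by
    unfold flattenW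
    split
    · exact Finset.sum_nonneg fun N _ =>
        mul_nonneg (Δ.nonneg N) (Finset.prod_nonneg fun i _ => (N i).2.1 _)
    · exact le_refl 0
  sum_one := by
    rw [Finset.sum_image (fun a _ b _ hab => diracProfile_injective hab)]
    calc ∑ a : ∀ i : Fin m, A i, flattenW Δ (diracProfile a)
        = ∑ a : ∀ i : Fin m, A i, ∑ N ∈ Δ.support, Δ.w N * ∏ i, (N i).1 (a i) :=
          Finset.sum_congr rfl fun a _ => flattenW_dirac Δ a
      _ = ∑ N ∈ Δ.support, ∑ a : ∀ i : Fin m, A i, Δ.w N * ∏ i, (N i).1 (a i) :=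
          Finset.sum_comm
      _ = ∑ N ∈ Δ.support, Δ.w N := by
          refine Finset.sum_congr rfl fun N _ => ?_
          rw [← Finset.mul_sum, sum_prod_mixed N, mul_one]
      _ = 1 := Δ.sum_one
  zero_of_not_mem := fun M hM => by
    unfold flattenW
    rw [dif_neg]
    rintro ⟨a, rfl⟩
    exact hM (Finset.mem_image_of_mem _ (Finset.mem_univ a))

lemma flatten_flattens (Δ : FinDist (PureMeta A)) : Flattens Δ (flatten Δ) := by
  classical
  constructor
  · intro M hM
    have hM' : M ∈ Finset.image (diracProfile (A := A)) Finset.univ := hM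
    obtain ⟨a, _, ha⟩ := Finset.mem_image.1 hM'
    exact ⟨a, ha.symm⟩
  · exact fun a => flattenW_dirac Δ a

lemma flatten_roleHomogeneous (Δ : FinDist (PureMeta A)) : RoleHomogeneous (flatten Δ) :=
  (flatten_flattens Δ).1

lemma iterate_flatten {Γ : Fin k → FinDist (PureMeta A)} (hN : Nash u p Γ) (n : ℕ) :
    ∃ Γ' : Fin k → FinDist (PureMeta A), Nash u p Γ' ∧
      (∀ ℓ : Fin k, U u p Γ' ℓ = U u p Γ ℓ) ∧
      ∀ j : Fin k, (j : ℕ) < n → RoleHomogeneous (Γ' j) := by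
  induction n with
  | zero => exact ⟨Γ, hN, fun _ => rfl, fun j hj => absurd hj (Nat.not_lt_zero _)⟩
  | succ n ih =>
    obtain ⟨Γ', h1, h2, h3⟩ := ih
    by_cases h : n < k
    · set j : Fin k := ⟨n, h⟩ with hj
      obtain ⟨hN', hU'⟩ := flatten_step u p h1 j (flatten_flattens (Γ' j))
      refine ⟨Function.update Γ' j (flatten (Γ' j)), hN',
        fun ℓ => (hU' ℓ).trans (h2 ℓ), ?_⟩
      intro j' hj'
      rcases eq_or_ne j' j with rfl | hne
      · rw [Function.update_self]
        exact flatten_roleHomogeneous _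
      · rw [Function.update_of_ne hne]
        apply h3
        have hvne : (j' : ℕ) ≠ n := fun hval => hne (Fin.ext hval)
        omega
    · refine ⟨Γ', h1, h2, fun j' _ => h3 j' ?_⟩
      have := j'.isLt
      omega

end Helpers

/-- If `Γ` is a Nash equilibrium of the one-shot meta-game, then replacing the meta-action of any
LLM `j` by its role-homogeneous flattening again yields a Nash equilibrium with the same utility
for every LLM; consequently, every Nash-equilibrium payoff vector is induced by some Nash
equilibrium in which every LLM uses a role-homogeneous meta-action. -/
theorem role_homogeneous_equilibrium
    {m k : ℕ} {A : Fin m → Type} [∀ i, Fintype (A i)] [∀ i, DecidableEq (A i)]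
    (u : ∀ i : Fin m, (∀ r : Fin m, A r) → ℝ) (p : Fin m → Fin k → ℝ)
    (hp0 : ∀ i j, 0 ≤ p i j) (hp1 : ∀ i, ∑ j, p i j = 1)
    (Γ : Fin k → FinDist (PureMeta A)) (hNash : Nash u p Γ) :
    (∀ (j : Fin k) (Γhat : FinDist (PureMeta A)), Flattens (Γ j) Γhat →
      Nash u p (Function.update Γ j Γhat) ∧
      ∀ ℓ : Fin k, U u p (Function.update Γ j Γhat) ℓ = U u p Γ ℓ) ∧
    (∃ Γ' : Fin k → FinDist (PureMeta A),
      Nash u p Γ' ∧ (∀ j, RoleHomogeneous (Γ' j)) ∧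
      ∀ ℓ : Fin k, U u p Γ' ℓ = U u p Γ ℓ) := by
  constructor
  · intro j Γhat hF
    exact flatten_step u p hNash j hF
  · obtain ⟨Γ', h1, h2, h3⟩ := iterate_flatten u p hNash k
    exact ⟨Γ', h1, fun j => h3 j j.isLt, h2⟩

end MetaGame
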